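/- arXiv:1009.2171 — 2 statements merged into one kernel-verified Lean document; each statement's English description precedes it below -/
import Mathlib

section
/- Let G be a finite solvable group in which the centralizer C = C_G(Fit(G)) of the Fitting subgroup satisfies C ≅ Z_{p^{α₁}} × Z_{p^{α₂}} with 1 ≤ α₁ ≤ α₂, p a prime, and the index |G : C| is a prime. Then sd(G) ≥ g(p, α₁, α₂) / (2 · |L(G)|²), where g(p, α₁, α₂) = (1/(p − 1)⁴) · [ (α₂ − α₁ + 1)p^{α₁+2} − (α₂ − α₁ − 1)p^{α₁+1} − (α₁ + α₂ + 3)p + (α₁ + α₂ + 1) ]² + 4. -/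
open scoped Pointwise

/-- Two subgroups `X`, `Y` permute if `XY = YX` as sets. -/
def Permutes {G : Type*} [Group G] (X Y : Subgroup G) : Prop :=
  (X : Set G) * (Y : Set G) = (Y : Set G) * (X : Set G)

/-- A subgroup `H` of `G` is subnormal if there is a finite chain
`H = H₀ ⊴ H₁ ⊴ … ⊴ Hₙ = G` with each term normal in the next. -/
def Subnormal {G : Type*} [Group G] (H : Subgroup G) : Prop :=
  ∃ n : ℕ, ∃ c : ℕ → Subgroup G, c 0 = H ∧ c n = ⊤ ∧
    ∀ i < n, c i ≤ c (i + 1) ∧ ((c i).subgroupOf (c (i + 1))).Normal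

/-- The subgroup S-commutativity degree
`spd(G) = |{(X,Y) ∈ sn(G) × M(G) : XY = YX}| / (|sn(G)|·|M(G)|)`;
maximal subgroups of `G` are exactly the coatoms of its subgroup lattice. -/
noncomputable def spd (G : Type*) [Group G] : ℝ :=
  (Nat.card {q : Subgroup G × Subgroup G //
      Subnormal q.1 ∧ IsCoatom q.2 ∧ Permutes q.1 q.2} : ℝ) /
    ((Nat.card {H : Subgroup G // Subnormal H} : ℝ) *
      (Nat.card {H : Subgroup G // IsCoatom H} : ℝ))

/-- The subgroup commutativity degree
`sd(G) = |{(X,Y) ∈ L(G)² : XY = YX}| / |L(G)|²`. -/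
noncomputable def sd (G : Type*) [Group G] : ℝ :=
  (Nat.card {q : Subgroup G × Subgroup G // Permutes q.1 q.2} : ℝ) /
    (Nat.card (Subgroup G) : ℝ) ^ 2

/-- The Fitting subgroup: the subgroup generated by all nilpotent normal subgroups. -/
def FittingSubgroup (G : Type*) [Group G] : Subgroup G :=
  ⨆ (H : Subgroup G) (_ : H.Normal ∧ Group.IsNilpotent ↥H), H

/-- The centralizer `C_G(Fit(G))` of the Fitting subgroup. -/
def FitCentralizer (G : Type*) [Group G] : Subgroup G :=
  Subgroup.centralizer (FittingSubgroup G : Set G)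

/-!
Since `C = C_G(Fit(G)) ≅ Z_{p^α₁} × Z_{p^α₂}` is abelian, any two of its subgroups permute, so
`sd(G) ≥ |L(C)|² / |L(G)|²`. The subgroups of `Z_{p^a} × Z_{p^b}` include a family indexed by
`i ≤ a`, `k ≤ b` and a residue `c` modulo `p^(min i k)`, so `|L(C)| ≥ T := ∑ p^(min i k)`; and
`(p - 1)² T` is exactly the bracket in `g`. Hence `g = T² + 4 ≤ 2 T²`, because `T ≥ 2`.
-/

open Finset

section SumFormula

variable {R : Type*} [CommRing R]

lemma sum_range_pow_min (x : R) {i n : ℕ} (hi : i ≤ n) :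
    ∑ k ∈ range n, x ^ min i k = ∑ k ∈ range i, x ^ k + ((n - i : ℕ) : R) * x ^ i := by
  obtain ⟨m, rfl⟩ := Nat.exists_eq_add_of_le hi
  rw [sum_range_add, Nat.add_sub_cancel_left]
  congr 1
  · exact sum_congr rfl fun k hk => by rw [min_eq_right (mem_range.mp hk).le]
  · simp

lemma sub_one_sq_mul_sum_sum_pow_min (x : R) {a b : ℕ} (hab : a ≤ b) :
    (x - 1) ^ 2 * ∑ i ∈ range (a + 1), ∑ k ∈ range (b + 1), x ^ min i k =
      ((b : R) - a + 1) * x ^ (a + 2) - ((b : R) - a - 1) * x ^ (a + 1)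
        - ((a : R) + b + 3) * x + ((a : R) + b + 1) := by
  induction a with
  | zero =>
    simp only [zero_add, range_one, sum_singleton, Nat.zero_min, pow_zero, sum_const, card_range,
      nsmul_eq_mul, mul_one, Nat.cast_add, Nat.cast_one, Nat.cast_zero]
    ring
  | succ a ih =>
    rw [sum_range_succ, mul_add, ih (by omega), sum_range_pow_min x (by omega : a + 1 ≤ b + 1),
      mul_add, sq (x - 1), mul_assoc, mul_geom_sum, Nat.cast_sub (by omega)]
    push_cast
    ring

end SumFormula

lemma two_le_sum_sum_pow_min {p : ℕ} (hp : 0 < p) (a : ℕ) {b : ℕ} (hb : 1 ≤ b) :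
    2 ≤ ∑ i ∈ range (a + 1), ∑ k ∈ range (b + 1), p ^ min i k :=
  calc 2 ≤ (a + 1) * (b + 1) := by nlinarith
    _ = ∑ i ∈ range (a + 1), ∑ k ∈ range (b + 1), 1 := by simp
    _ ≤ _ := sum_le_sum fun _ _ => sum_le_sum fun _ _ => Nat.one_le_pow _ _ hp

lemma pow_sub_dvd_of_pow_dvd_mul_pow {M : Type*} [CommMonoidWithZero M] [IsCancelMulZero M]
    {p x : M} (hp : p ≠ 0) {s t : ℕ} (hts : t ≤ s) (h : p ^ s ∣ x * p ^ t) : p ^ (s - t) ∣ x := by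
  rw [← Nat.sub_add_cancel hts, pow_add] at h
  exact (mul_dvd_mul_iff_right (pow_ne_zero _ hp)).mp h

lemma pow_dvd_mul_mul_pow_sub_min {M : Type*} [CommMonoid M] {p u : M} (c : M) {i k : ℕ}
    (hu : p ^ i ∣ u) : p ^ k ∣ u * c * p ^ (k - min i k) := by
  rw [← pow_mul_pow_sub p (min_le_right i k)]
  exact mul_dvd_mul (((pow_dvd_pow p (min_le_left i k)).trans hu).mul_right c) dvd_rfl

lemma Int.natCast_pow_dvd_pow_iff {p : ℕ} (hp : 1 < p) {s t : ℕ} :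
    (p : ℤ) ^ s ∣ (p : ℤ) ^ t ↔ s ≤ t := by
  rw [← Nat.pow_dvd_pow_iff_le_right hp]
  exact_mod_cast Iff.rfl

/-- For `i ≤ a` and `k ≤ b` this is the subgroup whose projection to `ZMod (p ^ a)` has order
`p ^ i` and whose intersection with `ZMod (p ^ b)` is generated by `p ^ k`; its element over
`p ^ (a - i)` is determined modulo `p ^ k` by `c` modulo `p ^ (min i k)`. -/
def zmodProdSubgroup (p a b i k c : ℕ) : AddSubgroup (ZMod (p ^ a) × ZMod (p ^ b)) :=
  AddSubgroup.closure
    {(((p ^ (a - i) : ℤ) : ZMod (p ^ a)), ((c * p ^ (k - min i k) : ℤ) : ZMod (p ^ b))),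
     (0, ((p ^ k : ℤ) : ZMod (p ^ b)))}

section ZModProdSubgroup

variable {p a b : ℕ}

lemma exists_of_intCast_mem_zmodProdSubgroup {i k c : ℕ} {x y : ℤ}
    (h : ((x : ZMod (p ^ a)), (y : ZMod (p ^ b))) ∈ zmodProdSubgroup p a b i k c) :
    ∃ u v : ℤ, (p : ℤ) ^ a ∣ x - u * p ^ (a - i) ∧
      (p : ℤ) ^ b ∣ y - (u * c * p ^ (k - min i k) + v * p ^ k) := by
  obtain ⟨u, v, huv⟩ := AddSubgroup.mem_closure_pair.mp h
  refine ⟨u, v, ?_, ?_⟩ <;> rw [← Nat.cast_pow, ← ZMod.intCast_eq_intCast_iff_dvd_sub]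
  · simpa using congrArg Prod.fst huv
  · simpa [mul_assoc] using congrArg Prod.snd huv

lemma le_and_le_of_zmodProdSubgroup_le (hp : 1 < p) {i k c i' k' c' : ℕ} (hi : i ≤ a)
    (hi' : i' ≤ a) (hk' : k' ≤ b)
    (hle : zmodProdSubgroup p a b i k c ≤ zmodProdSubgroup p a b i' k' c') :
    i ≤ i' ∧ k' ≤ k := by
  have hp0 : (p : ℤ) ≠ 0 := by positivity
  constructor
  · obtain ⟨u, -, hu, -⟩ := exists_of_intCast_mem_zmodProdSubgroup
      (hle (AddSubgroup.subset_closure (Set.mem_insert _ _)))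
    have : (p : ℤ) ^ (a - i') ∣ (p : ℤ) ^ (a - i) :=
      (dvd_sub_left (dvd_mul_left _ u)).mp ((pow_dvd_pow _ (Nat.sub_le a i')).trans hu)
    have := (Int.natCast_pow_dvd_pow_iff hp).mp this
    omega
  · obtain ⟨u, v, hu, hv⟩ := exists_of_intCast_mem_zmodProdSubgroup (x := 0) (y := p ^ k)
      (by simpa using hle (AddSubgroup.subset_closure (Set.mem_insert_of_mem _ rfl)))
    have hpu : (p : ℤ) ^ i' ∣ u := by
      have := pow_sub_dvd_of_pow_dvd_mul_pow hp0 (Nat.sub_le a i') (by simpa using hu)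
      rwa [Nat.sub_sub_self hi'] at this
    have : (p : ℤ) ^ k' ∣ (p : ℤ) ^ k := by
      have := (pow_dvd_pow _ hk').trans hv
      rwa [dvd_sub_left (dvd_add (pow_dvd_mul_mul_pow_sub_min _ hpu) (dvd_mul_left _ v))] at this
    exact (Int.natCast_pow_dvd_pow_iff hp).mp this

lemma modEq_of_zmodProdSubgroup_le (hp : p ≠ 0) {i k c c' : ℕ} (hi : i ≤ a) (hk : k ≤ b)
    (hle : zmodProdSubgroup p a b i k c ≤ zmodProdSubgroup p a b i k c') :
    c ≡ c' [MOD p ^ min i k] := by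
  have hp0 : (p : ℤ) ≠ 0 := by positivity
  obtain ⟨u, v, hu, hv⟩ := exists_of_intCast_mem_zmodProdSubgroup
    (hle (AddSubgroup.subset_closure (Set.mem_insert _ _)))
  have hpu : (p : ℤ) ^ i ∣ 1 - u := by
    have := pow_sub_dvd_of_pow_dvd_mul_pow hp0 (Nat.sub_le a i) (by rwa [← one_sub_mul] at hu)
    rwa [Nat.sub_sub_self hi] at this
  have hvk := (pow_dvd_pow (p : ℤ) hk).trans hv
  have hdiff : (p : ℤ) ^ k ∣ (c' - c) * p ^ (k - min i k) := by
    have : ((c' : ℤ) - c) * p ^ (k - min i k) =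
        -(c * p ^ (k - min i k) - (u * c' * p ^ (k - min i k) + v * p ^ k))
          + (1 - u) * c' * p ^ (k - min i k) - v * p ^ k := by ring
    rw [this]
    exact dvd_sub (dvd_add (dvd_neg.mpr (by simpa [mul_assoc] using hvk))
      (pow_dvd_mul_mul_pow_sub_min _ hpu)) (dvd_mul_left _ v)
  have := pow_sub_dvd_of_pow_dvd_mul_pow hp0 (Nat.sub_le k (min i k)) hdiff
  rw [Nat.sub_sub_self (min_le_right i k)] at this
  exact Nat.modEq_iff_dvd.mpr (by exact_mod_cast this)

lemma sum_sum_pow_min_le_card_addSubgroup (hp : 1 < p) (a b : ℕ) :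
    ∑ i ∈ range (a + 1), ∑ k ∈ range (b + 1), p ^ min i k ≤
      Nat.card (AddSubgroup (ZMod (p ^ a) × ZMod (p ^ b))) := by
  have : NeZero p := ⟨by omega⟩
  let f : (Σ i : Fin (a + 1), Σ k : Fin (b + 1), Fin (p ^ min (i : ℕ) k)) →
      AddSubgroup (ZMod (p ^ a) × ZMod (p ^ b)) :=
    fun x => zmodProdSubgroup p a b x.1 x.2.1 x.2.2
  have hf : Function.Injective f := by
    rintro ⟨i, k, c⟩ ⟨i', k', c'⟩ h
    dsimp only [f] at h
    have hi := i.is_le; have hk := k.is_le; have hi' := i'.is_le; have hk' := k'.is_le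
    obtain ⟨hii', hk'k⟩ := le_and_le_of_zmodProdSubgroup_le hp hi hi' hk' h.le
    obtain ⟨hi'i, hkk'⟩ := le_and_le_of_zmodProdSubgroup_le hp hi' hi hk h.ge
    obtain rfl : i = i' := Fin.ext (by omega)
    obtain rfl : k = k' := Fin.ext (by omega)
    obtain rfl : c = c' :=
      Fin.ext ((modEq_of_zmodProdSubgroup_le (by omega) hi hk h.le).eq_of_lt_of_lt c.2 c'.2)
    rfl
  calc ∑ i ∈ range (a + 1), ∑ k ∈ range (b + 1), p ^ min i k
      = Nat.card (Σ i : Fin (a + 1), Σ k : Fin (b + 1), Fin (p ^ min (i : ℕ) k)) := by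
        rw [Nat.card_eq_fintype_card, Fintype.card_sigma]
        simp only [Fintype.card_sigma, Fintype.card_fin, Finset.sum_range]
    _ ≤ _ := Nat.card_le_card_of_injective f hf

end ZModProdSubgroup

lemma card_subgroup_eq_card_addSubgroup {K M : Type*} [Group K] [AddGroup M]
    (e : K ≃* Multiplicative M) : Nat.card (Subgroup K) = Nat.card (AddSubgroup M) :=
  Nat.card_congr (e.mapSubgroup.trans AddSubgroup.toSubgroup.symm).toEquiv

section Permutes

variable {G : Type*} [Group G]

lemma permutes_of_le_of_isMulCommutative {H X Y : Subgroup G} [IsMulCommutative H]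
    (hX : X ≤ H) (hY : Y ≤ H) : Permutes X Y := by
  rw [Permutes, ← Set.image2_mul, ← Set.image2_mul, Set.image2_swap]
  exact Set.image2_congr fun y hy x hx => setLike_mul_comm (hX hx) (hY hy)

lemma card_subgroup_sq_le_card_permutes [Finite (Subgroup G)] (H : Subgroup G)
    [IsMulCommutative H] :
    Nat.card (Subgroup H) ^ 2 ≤ Nat.card {q : Subgroup G × Subgroup G // Permutes q.1 q.2} := by
  let f : Subgroup H × Subgroup H → {q : Subgroup G × Subgroup G // Permutes q.1 q.2} :=
    fun q => ⟨(q.1.map H.subtype, q.2.map H.subtype),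
      permutes_of_le_of_isMulCommutative (H := H) (Subgroup.map_subtype_le _)
        (Subgroup.map_subtype_le _)⟩
  have hf : Function.Injective f := fun q q' h => by
    have hmap := Subgroup.map_injective (f := H.subtype) H.subtype_injective
    exact Prod.ext (hmap congr($h.1.1)) (hmap congr($h.1.2))
  simpa [sq, Nat.card_prod] using Nat.card_le_card_of_injective f hf

end Permutes

lemma sq_add_four_div_le_div {T N : ℕ} (hT : 2 ≤ T) (hN : T ^ 2 ≤ N) (D : ℝ) :
    ((T : ℝ) ^ 2 + 4) / (2 * D ^ 2) ≤ N / D ^ 2 := by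
  rw [← div_div]
  refine div_le_div_of_nonneg_right ?_ (sq_nonneg D)
  have hT' : (2 : ℝ) ≤ T := by exact_mod_cast hT
  have hN' : (T : ℝ) ^ 2 ≤ N := by exact_mod_cast hN
  nlinarith

theorem sd_lower_bound_solvable_general (G : Type*) [Group G]
    (p α₁ α₂ : ℕ) (hp : p.Prime) (hα₁ : 1 ≤ α₁) (hα₁₂ : α₁ ≤ α₂)
    (hCiso : Nonempty (↥(FitCentralizer G) ≃*
      Multiplicative (ZMod (p ^ α₁)) × Multiplicative (ZMod (p ^ α₂)))) :
    sd G ≥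
      ((1 / ((p : ℝ) - 1) ^ 4) *
          (((α₂ : ℝ) - α₁ + 1) * (p : ℝ) ^ (α₁ + 2) -
            ((α₂ : ℝ) - α₁ - 1) * (p : ℝ) ^ (α₁ + 1) -
            ((α₁ : ℝ) + α₂ + 3) * p + ((α₁ : ℝ) + α₂ + 1)) ^ 2 + 4) /
        (2 * (Nat.card (Subgroup G) : ℝ) ^ 2) := by
  obtain ⟨e⟩ := hCiso
  have : IsMulCommutative (FitCentralizer G) :=
    .of_comm fun x y => e.injective (by simp only [map_mul, mul_comm])
  set T := ∑ i ∈ range (α₁ + 1), ∑ k ∈ range (α₂ + 1), p ^ min i k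
  have hTC : T ≤ Nat.card (Subgroup (FitCentralizer G)) :=
    card_subgroup_eq_card_addSubgroup (e.trans (MulEquiv.prodMultiplicative _ _).symm) ▸
      sum_sum_pow_min_le_card_addSubgroup hp.one_lt α₁ α₂
  have hg : 1 / ((p : ℝ) - 1) ^ 4 * (((α₂ : ℝ) - α₁ + 1) * (p : ℝ) ^ (α₁ + 2) -
      ((α₂ : ℝ) - α₁ - 1) * (p : ℝ) ^ (α₁ + 1) - ((α₁ : ℝ) + α₂ + 3) * p +
      ((α₁ : ℝ) + α₂ + 1)) ^ 2 = (T : ℝ) ^ 2 := by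
    have hp1 : (p : ℝ) - 1 ≠ 0 := sub_ne_zero.mpr (by exact_mod_cast hp.ne_one)
    rw [← sub_one_sq_mul_sum_sum_pow_min (p : ℝ) hα₁₂]
    push_cast [T]
    field_simp
  rw [hg]
  rcases finite_or_infinite (Subgroup G) with hfin | hinf
  · exact sq_add_four_div_le_div (two_le_sum_sum_pow_min hp.pos α₁ (hα₁.trans hα₁₂))
      ((Nat.pow_le_pow_left hTC 2).trans (card_subgroup_sq_le_card_permutes _)) _
  -- both sides are `_ / 0 = 0`
  · simp [sd, Nat.card_eq_zero_of_infinite]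

/-- Theorem, part (ii): lower bound for `sd(G)` when `G` is solvable
and `C = C_G(Fit(G)) ≅ Z_{p^α₁} × Z_{p^α₂}` has prime index. -/
theorem sd_lower_bound_solvable (G : Type*) [Group G] [Finite G] [Group.IsSolvable G]
    (p α₁ α₂ : ℕ) (hp : p.Prime) (hα₁ : 1 ≤ α₁) (hα₁₂ : α₁ ≤ α₂)
    (hCiso : Nonempty (↥(FitCentralizer G) ≃*
      Multiplicative (ZMod (p ^ α₁)) × Multiplicative (ZMod (p ^ α₂))))
    (hidx : (FitCentralizer G).index.Prime) :
    sd G ≥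
      ((1 / ((p : ℝ) - 1) ^ 4) *
          (((α₂ : ℝ) - α₁ + 1) * (p : ℝ) ^ (α₁ + 2) -
            ((α₂ : ℝ) - α₁ - 1) * (p : ℝ) ^ (α₁ + 1) -
            ((α₁ : ℝ) + α₂ + 3) * p + ((α₁ : ℝ) + α₂ + 1)) ^ 2 + 4) /
        (2 * (Nat.card (Subgroup G) : ℝ) ^ 2) :=
  sd_lower_bound_solvable_general G p α₁ α₂ hp hα₁ hα₁₂ hCiso
end

section
/- Let G be a finite group, N a normal subgroup of G, and H a subgroup of G with G = NH and H ≅ G/N, satisfying conditions (a:1) and (a:2): every subnormal subgroup of H is subnormal in G and every maximal subgroup of H is maximal in G, and every subnormal subgroup of N is subnormal in G and every maximal subgroup of N is maximal in G. Then spd(G) ≥ (1 / (|sn(G)| · |M(G)|)) · √( Σ_{(X,Y) ∈ sn(N)×M(N)} Σ_{(Z,T) ∈ sn(H)×M(H)} χ(X,Y) · χ(Z,T) ), where χ(X,Y) = 1 if XY = YX and χ(X,Y) = 0 otherwise. -/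
open scoped Pointwise

lemma permutes_map {G : Type*} [Group G] (N : Subgroup G) {X Y : Subgroup ↥N}
    (h : Permutes X Y) : Permutes (X.map N.subtype) (Y.map N.subtype) := by
  unfold Permutes at *
  simp only [Subgroup.coe_map, ← Set.image_mul, h]

lemma card_perm_le {G : Type*} [Group G] [Finite G] (N : Subgroup G)
    (hsn : ∀ K : Subgroup ↥N, Subnormal K → Subnormal (K.map N.subtype))
    (hm : ∀ K : Subgroup ↥N, IsCoatom K → IsCoatom (K.map N.subtype)) :
    Nat.card {q : Subgroup ↥N × Subgroup ↥N //
        Subnormal q.1 ∧ IsCoatom q.2 ∧ Permutes q.1 q.2} ≤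
      Nat.card {q : Subgroup G × Subgroup G //
        Subnormal q.1 ∧ IsCoatom q.2 ∧ Permutes q.1 q.2} := by
  apply Nat.card_le_card_of_injective
    (fun q => ⟨(q.1.1.map N.subtype, q.1.2.map N.subtype),
      hsn _ q.2.1, hm _ q.2.2.1, permutes_map N q.2.2.2⟩)
  intro a b hab
  have hinj := Subgroup.map_injective (f := N.subtype) Subtype.coe_injective
  ext1
  have h1 := congrArg (fun x => x.1.1) hab
  have h2 := congrArg (fun x => x.1.2) hab
  exact Prod.ext (hinj h1) (hinj h2)

/-- Proposition: if `G = NH` with `N ⊴ G`, `H ≅ G/N` and (a:1), (a:2)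
hold, then `spd(G) ≥ (1/(|sn(G)||M(G)|))·√(Σ χ(X,Y)χ(Z,T))`, the sum running over
`(X,Y) ∈ sn(N)×M(N)` and `(Z,T) ∈ sn(H)×M(H)`; since `χ` is a `0/1`-indicator of
permutability, the double sum is the number of quadruples with both pairs permuting. -/
theorem spd_sqrt_lower_bound (G : Type*) [Group G] [Finite G]
    (N H : Subgroup G) [N.Normal]
    (hprod : (N : Set G) * (H : Set G) = Set.univ)
    (hiso : Nonempty (↥H ≃* G ⧸ N))
    (ha1sn : ∀ K : Subgroup ↥H, Subnormal K → Subnormal (K.map H.subtype))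
    (ha1m : ∀ K : Subgroup ↥H, IsCoatom K → IsCoatom (K.map H.subtype))
    (ha2sn : ∀ K : Subgroup ↥N, Subnormal K → Subnormal (K.map N.subtype))
    (ha2m : ∀ K : Subgroup ↥N, IsCoatom K → IsCoatom (K.map N.subtype)) :
    spd G ≥
      (1 / ((Nat.card {X : Subgroup G // Subnormal X} : ℝ) *
          (Nat.card {Y : Subgroup G // IsCoatom Y} : ℝ))) *
        Real.sqrt
          (Nat.card {q : (Subgroup ↥N × Subgroup ↥N) × (Subgroup ↥H × Subgroup ↥H) //
            (Subnormal q.1.1 ∧ IsCoatom q.1.2 ∧ Permutes q.1.1 q.1.2) ∧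
              (Subnormal q.2.1 ∧ IsCoatom q.2.2 ∧ Permutes q.2.1 q.2.2)}) := by

  classical
  set a : ℕ := Nat.card {q : Subgroup ↥N × Subgroup ↥N //
      Subnormal q.1 ∧ IsCoatom q.2 ∧ Permutes q.1 q.2} with ha
  set b : ℕ := Nat.card {q : Subgroup ↥H × Subgroup ↥H //
      Subnormal q.1 ∧ IsCoatom q.2 ∧ Permutes q.1 q.2} with hb
  set p : ℕ := Nat.card {q : Subgroup G × Subgroup G //
      Subnormal q.1 ∧ IsCoatom q.2 ∧ Permutes q.1 q.2} with hp
  set s : ℕ := Nat.card {X : Subgroup G // Subnormal X} with hs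
  set m : ℕ := Nat.card {Y : Subgroup G // IsCoatom Y} with hm
  have hquad : (Nat.card {q : (Subgroup ↥N × Subgroup ↥N) × (Subgroup ↥H × Subgroup ↥H) //
      (Subnormal q.1.1 ∧ IsCoatom q.1.2 ∧ Permutes q.1.1 q.1.2) ∧
        (Subnormal q.2.1 ∧ IsCoatom q.2.2 ∧ Permutes q.2.1 q.2.2)}) = a * b := by
    rw [← Nat.card_prod]
    exact Nat.card_congr (Equiv.subtypeProdEquivProd
      (p := fun x : Subgroup ↥N × Subgroup ↥N => Subnormal x.1 ∧ IsCoatom x.2 ∧ Permutes x.1 x.2)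
      (q := fun x : Subgroup ↥H × Subgroup ↥H => Subnormal x.1 ∧ IsCoatom x.2 ∧ Permutes x.1 x.2))
  have hA : a ≤ p := card_perm_le N ha2sn ha2m
  have hB : b ≤ p := card_perm_le H ha1sn ha1m
  have hsqrt : Real.sqrt ((a : ℝ) * b) ≤ (p : ℝ) := by
    have : ((a : ℝ) * b) ≤ (p : ℝ) * p := by
      apply mul_le_mul (by exact_mod_cast hA) (by exact_mod_cast hB)
        (by positivity) (by positivity)
    calc Real.sqrt ((a : ℝ) * b) ≤ Real.sqrt ((p : ℝ) * p) := Real.sqrt_le_sqrt this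
      _ = p := Real.sqrt_mul_self (by positivity)
  rw [ge_iff_le, spd, ← hp, ← hs, ← hm, hquad]
  rcases eq_or_ne ((s : ℝ) * m) 0 with h0 | h0
  · rw [h0]
    simp
  · have hpos : 0 < (s : ℝ) * m := by
      rcases lt_or_eq_of_le (by positivity : (0:ℝ) ≤ (s:ℝ) * m) with h | h
      · exact h
      · exact absurd h.symm h0
    rw [one_div, inv_mul_eq_div, div_le_div_iff₀ hpos hpos]
    push_cast
    have := mul_le_mul_of_nonneg_right hsqrt (le_of_lt hpos)
    calc Real.sqrt ((a:ℝ) * b) * ((s:ℝ) * m) ≤ (p : ℝ) * ((s:ℝ) * m) := this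
      _ = _ := by ring
end
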